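/- In G = ⟨⟨a₁, a₃⟩⟩ ⊂ Aut(T) (with a₁ = σ, a₃ = (a₂,a₃), a₂ = (a₃⁻¹,a₂⁻¹)σ, a₁a₂a₃ = id), the normal closure U of the closed subgroup generated by a₂a₃⁻¹ is topologically generated by γ₁ = a₂a₃⁻¹ and γ₂ = a₃⁻¹a₂. -/

import Mathlib

open Equiv

/-- Vertices of the infinite rooted binary tree: finite words over `Bool`.
The parent of a nonempty word is `dropLast`. -/
abbrev Wd := List Bool

/-- The group `Ω = Aut(T)` of automorphisms of the infinite rooted binary tree,
realized as the subgroup of permutations of the vertex set preserving length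
(levels) and the parent relation. -/
def OmegaSG : Subgroup (Equiv.Perm Wd) where
  carrier := {σ | (∀ w, (σ w).length = w.length) ∧ ∀ w, (σ w).dropLast = σ w.dropLast}
  one_mem' := ⟨fun _ => rfl, fun _ => rfl⟩
  mul_mem' := by
    rintro σ τ ⟨hσl, hσd⟩ ⟨hτl, hτd⟩
    refine ⟨fun w => ?_, fun w => ?_⟩
    · simp [Equiv.Perm.mul_apply, hσl, hτl]
    · simp [Equiv.Perm.mul_apply, hσd, hτd]
  inv_mem' := by
    rintro σ ⟨hl, hd⟩
    refine ⟨fun w => ?_, fun w => ?_⟩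
    · have := hl (σ⁻¹ w)
      rw [show σ (σ⁻¹ w) = w from σ.apply_symm_apply w] at this
      exact this.symm
    · apply σ.injective
      have := hd (σ⁻¹ w)
      rw [show σ (σ⁻¹ w) = w from σ.apply_symm_apply w] at this
      rw [← this]
      simp

/-- The section pairing: `(u,v)` acts as `u` on the subtree rooted at `false`
and as `v` on the subtree rooted at `true`. -/
def pairFun (f g : Wd → Wd) : Wd → Wd
  | [] => []
  | false :: w => false :: f w
  | true :: w => true :: g w

@[simp] lemma pairFun_nil (f g : Wd → Wd) : pairFun f g [] = [] := rfl
@[simp] lemma pairFun_false (f g : Wd → Wd) (w : Wd) :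
    pairFun f g (false :: w) = false :: f w := rfl
@[simp] lemma pairFun_true (f g : Wd → Wd) (w : Wd) :
    pairFun f g (true :: w) = true :: g w := rfl

lemma pairFun_comp (f g f' g' : Wd → Wd) (hf : ∀ w, f (f' w) = w) (hg : ∀ w, g (g' w) = w) :
    ∀ w, pairFun f g (pairFun f' g' w) = w := by
  rintro (_ | ⟨(_|_), w⟩) <;> simp [hf, hg]

/-- The permutation `(u,v)` of the tree. -/
def pairPerm (u v : Equiv.Perm Wd) : Equiv.Perm Wd where
  toFun := pairFun u v
  invFun := pairFun u.symm v.symm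
  left_inv := pairFun_comp _ _ _ _ (fun w => u.symm_apply_apply w) (fun w => v.symm_apply_apply w)
  right_inv := pairFun_comp _ _ _ _ (fun w => u.apply_symm_apply w) (fun w => v.apply_symm_apply w)

@[simp] lemma pairPerm_apply (u v : Equiv.Perm Wd) (w : Wd) :
    pairPerm u v w = pairFun u v w := rfl

/-- The first-level swap `σ`. -/
def swapPerm : Equiv.Perm Wd where
  toFun w := match w with | [] => [] | b :: w => (!b) :: w
  invFun w := match w with | [] => [] | b :: w => (!b) :: w
  left_inv := by rintro (_ | ⟨b, w⟩) <;> simp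
  right_inv := by rintro (_ | ⟨b, w⟩) <;> simp

@[simp] lemma swapPerm_nil : swapPerm [] = [] := rfl
@[simp] lemma swapPerm_cons (b : Bool) (w : Wd) : swapPerm (b :: w) = (!b) :: w := rfl

lemma swapPerm_mem : swapPerm ∈ OmegaSG := by
  constructor
  · rintro (_ | ⟨b, w⟩) <;> simp
  · rintro (_ | ⟨b, w⟩)
    · simp
    · rcases eq_or_ne w [] with rfl | hw
      · simp
      · simp only [swapPerm_cons, List.dropLast_cons_of_ne_nil hw]

lemma mem_omega_length {u : Equiv.Perm Wd} (hu : u ∈ OmegaSG) (w : Wd) :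
    (u w).length = w.length := hu.1 w

lemma mem_omega_ne_nil {u : Equiv.Perm Wd} (hu : u ∈ OmegaSG) {w : Wd} (hw : w ≠ []) :
    u w ≠ [] := by
  intro h
  exact hw (List.eq_nil_of_length_eq_zero (by rw [← hu.1 w, h]; rfl))

lemma mem_omega_nil {u : Equiv.Perm Wd} (hu : u ∈ OmegaSG) : u [] = [] :=
  List.eq_nil_of_length_eq_zero (hu.1 [])

lemma pairPerm_mem {u v : Equiv.Perm Wd} (hu : u ∈ OmegaSG) (hv : v ∈ OmegaSG) :
    pairPerm u v ∈ OmegaSG := by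
  constructor
  · rintro (_ | ⟨(_|_), w⟩) <;> simp [hu.1, hv.1]
  · rintro (_ | ⟨(_|_), w⟩)
    · simp
    · rcases eq_or_ne w [] with rfl | hw
      · simp [mem_omega_nil hu]
      · simp only [pairPerm_apply, pairFun_false, List.dropLast_cons_of_ne_nil hw,
          List.dropLast_cons_of_ne_nil (mem_omega_ne_nil hu hw)]
        rw [hu.2]
    · rcases eq_or_ne w [] with rfl | hw
      · simp [mem_omega_nil hv]
      · simp only [pairPerm_apply, pairFun_true, List.dropLast_cons_of_ne_nil hw,
          List.dropLast_cons_of_ne_nil (mem_omega_ne_nil hv hw)]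
        rw [hv.2]

/-- `(u,v)` as an element of `Ω`. -/
def pairOm (u v : OmegaSG) : OmegaSG := ⟨pairPerm u.1 v.1, pairPerm_mem u.2 v.2⟩

/-- `σ` as an element of `Ω`. -/
def swapOm : OmegaSG := ⟨swapPerm, swapPerm_mem⟩

/-! ### Levels, restriction, sign, odometers -/

/-- Level `n` of the tree: words of length `n`. -/
abbrev Lv (n : ℕ) := {w : Wd // w.length = n}

instance fintypeLv (n : ℕ) : Fintype (Lv n) := by
  apply Fintype.ofSurjective (fun g : Fin n → Bool => (⟨List.ofFn g, List.length_ofFn (f := g)⟩ : Lv n))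
  rintro ⟨w, rfl⟩
  exact ⟨w.get, Subtype.ext (List.ofFn_get w)⟩

/-- The permutation induced by `g ∈ Ω` on level `n`. -/
def levelPerm (n : ℕ) (g : OmegaSG) : Equiv.Perm (Lv n) where
  toFun w := ⟨g.1 w.1, by rw [mem_omega_length g.2, w.2]⟩
  invFun w := ⟨(g⁻¹ : OmegaSG).1 w.1, by rw [mem_omega_length (g⁻¹ : OmegaSG).2, w.2]⟩
  left_inv w := Subtype.ext (by simp)
  right_inv w := Subtype.ext (by simp)

/-- Restriction to level `n` as a group homomorphism. -/
def levelHom (n : ℕ) : OmegaSG →* Equiv.Perm (Lv n) where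
  toFun := levelPerm n
  map_one' := Equiv.ext fun w => Subtype.ext rfl
  map_mul' g h := Equiv.ext fun w => Subtype.ext rfl

/-- `sgn_n`: the sign of the permutation induced on level `n`. -/
noncomputable def sgn (n : ℕ) (g : OmegaSG) : ℤˣ := Equiv.Perm.sign (levelPerm n g)

/-- An odometer: an element acting transitively on every level of the tree. -/
def IsOdometer (g : OmegaSG) : Prop :=
  ∀ n : ℕ, ∀ v w : Lv n, ∃ k : ℤ, ((g ^ k : OmegaSG) : Equiv.Perm Wd) v.1 = w.1

/-! ### The profinite topology on `Aut(T)` -/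

instance : TopologicalSpace Wd := ⊥
instance : DiscreteTopology Wd := ⟨rfl⟩
instance : TopologicalSpace (Equiv.Perm Wd) :=
  TopologicalSpace.induced (fun g => (g : Wd → Wd)) Pi.topologicalSpace

lemma continuous_permCoe : Continuous (fun g : Equiv.Perm Wd => (g : Wd → Wd)) :=
  continuous_induced_dom

lemma continuous_permApply (w : Wd) : Continuous fun g : Equiv.Perm Wd => g w :=
  (continuous_apply w).comp continuous_permCoe

instance : IsTopologicalGroup (Equiv.Perm Wd) where
  continuous_mul := by
    apply continuous_induced_rng.2
    apply continuous_pi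
    intro w
    rw [continuous_discrete_rng]
    intro y
    have h : (fun p : Equiv.Perm Wd × Equiv.Perm Wd => ((p.1 * p.2 : Equiv.Perm Wd) : Wd → Wd) w) ⁻¹' {y}
        = ⋃ x : Wd, {p : Equiv.Perm Wd × Equiv.Perm Wd | p.2 w = x} ∩ {p | p.1 x = y} := by
      ext p
      simp only [Set.mem_preimage, Set.mem_singleton_iff, Set.mem_iUnion, Set.mem_inter_iff,
        Set.mem_setOf_eq, Equiv.Perm.mul_apply]
      constructor
      · intro hh; exact ⟨p.2 w, rfl, hh⟩
      · rintro ⟨x, rfl, hh⟩; exact hh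
    show IsOpen ((fun p : Equiv.Perm Wd × Equiv.Perm Wd =>
      ((p.1 * p.2 : Equiv.Perm Wd) : Wd → Wd) w) ⁻¹' {y})
    rw [h]
    refine isOpen_iUnion fun x => IsOpen.inter ?_ ?_
    · exact IsOpen.preimage ((continuous_permApply w).comp continuous_snd) (isOpen_discrete {x})
    · exact IsOpen.preimage ((continuous_permApply x).comp continuous_fst) (isOpen_discrete {y})
  continuous_inv := by
    apply continuous_induced_rng.2
    apply continuous_pi
    intro w
    rw [continuous_discrete_rng]
    intro y
    have h : (fun g : Equiv.Perm Wd => ((g⁻¹ : Equiv.Perm Wd) : Wd → Wd) w) ⁻¹' {y}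
        = {g : Equiv.Perm Wd | g y = w} := by
      ext g
      simp only [Set.mem_preimage, Set.mem_singleton_iff, Set.mem_setOf_eq]
      constructor
      · rintro rfl; simp
      · intro hh; rw [← hh]; simp
    show IsOpen ((fun g : Equiv.Perm Wd => ((g⁻¹ : Equiv.Perm Wd) : Wd → Wd) w) ⁻¹' {y})
    rw [h]
    exact IsOpen.preimage (continuous_permApply y) (isOpen_discrete {w})

/-! ### The recursive generators `a₁ = σ`, `a₂ = (a₃⁻¹, a₂⁻¹)σ`, `a₃ = (a₂, a₃)` -/

mutual
  /-- The underlying function of `a₂`. -/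
  def pA : Wd → Wd
    | [] => []
    | false :: w => true :: piA w
    | true :: w => false :: qiA w
  /-- The underlying function of `a₃`. -/
  def qA : Wd → Wd
    | [] => []
    | false :: w => false :: pA w
    | true :: w => true :: qA w
  /-- The underlying function of `a₂⁻¹`. -/
  def piA : Wd → Wd
    | [] => []
    | false :: w => true :: qA w
    | true :: w => false :: pA w
  /-- The underlying function of `a₃⁻¹`. -/
  def qiA : Wd → Wd
    | [] => []
    | false :: w => false :: piA w
    | true :: w => true :: qiA w
end

lemma a_inv_lemma : ∀ w : Wd, pA (piA w) = w ∧ piA (pA w) = w ∧ qA (qiA w) = w ∧ qiA (qA w) = w := by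
  intro w
  induction w with
  | nil => simp [pA, qA, piA, qiA]
  | cons b w ih =>
    cases b <;>
      simp [pA, qA, piA, qiA, ih.1, ih.2.1, ih.2.2.1, ih.2.2.2]

/-- The generator `a₂`. -/
def a2 : Equiv.Perm Wd where
  toFun := pA
  invFun := piA
  left_inv w := (a_inv_lemma w).2.1
  right_inv w := (a_inv_lemma w).1

/-- The generator `a₃`. -/
def a3 : Equiv.Perm Wd where
  toFun := qA
  invFun := qiA
  left_inv w := (a_inv_lemma w).2.2.2
  right_inv w := (a_inv_lemma w).2.2.1

lemma a_length_lemma : ∀ w : Wd, (pA w).length = w.length ∧ (qA w).length = w.length ∧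
    (piA w).length = w.length ∧ (qiA w).length = w.length := by
  intro w
  induction w with
  | nil => simp [pA, qA, piA, qiA]
  | cons b w ih =>
    cases b <;>
      simp [pA, qA, piA, qiA, ih.1, ih.2.1, ih.2.2.1, ih.2.2.2]

lemma a_ne_nil {f : Wd → Wd} (hf : ∀ w : Wd, (f w).length = w.length) {w : Wd} (hw : w ≠ []) :
    f w ≠ [] := by
  intro h
  exact hw (List.eq_nil_of_length_eq_zero (by rw [← hf w, h]; rfl))

lemma a_dropLast_lemma : ∀ w : Wd, (pA w).dropLast = pA w.dropLast ∧
    (qA w).dropLast = qA w.dropLast ∧ (piA w).dropLast = piA w.dropLast ∧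
    (qiA w).dropLast = qiA w.dropLast := by
  intro w
  induction w with
  | nil => simp [pA, qA, piA, qiA]
  | cons b w ih =>
    rcases eq_or_ne w [] with rfl | hw
    · cases b <;> simp [pA, qA, piA, qiA]
    · have hp := a_ne_nil (fun w => (a_length_lemma w).1) hw
      have hq := a_ne_nil (fun w => (a_length_lemma w).2.1) hw
      have hpi := a_ne_nil (fun w => (a_length_lemma w).2.2.1) hw
      have hqi := a_ne_nil (fun w => (a_length_lemma w).2.2.2) hw
      cases b <;>
        simp [pA, qA, piA, qiA, List.dropLast_cons_of_ne_nil hw,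
          List.dropLast_cons_of_ne_nil hp, List.dropLast_cons_of_ne_nil hq,
          List.dropLast_cons_of_ne_nil hpi, List.dropLast_cons_of_ne_nil hqi,
          ih.1, ih.2.1, ih.2.2.1, ih.2.2.2]

lemma a2_mem : a2 ∈ OmegaSG :=
  ⟨fun w => (a_length_lemma w).1, fun w => (a_dropLast_lemma w).1⟩

lemma a3_mem : a3 ∈ OmegaSG :=
  ⟨fun w => (a_length_lemma w).2.1, fun w => (a_dropLast_lemma w).2.1⟩

/-- `a₁ = σ` as an element of `Ω`. -/
def A1 : OmegaSG := swapOm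
/-- `a₂` as an element of `Ω`. -/
def A2 : OmegaSG := ⟨a2, a2_mem⟩
/-- `a₃` as an element of `Ω`. -/
def A3 : OmegaSG := ⟨a3, a3_mem⟩

/-- `G = ⟨⟨a₁, a₃⟩⟩`, the topological closure of the subgroup generated by `a₁` and `a₃`:
a model of the geometric iterated monodromy group of `f(x) = 2/(x-1)²`. -/
noncomputable def Ggrp : Subgroup OmegaSG :=
  (Subgroup.closure {A1, A3}).topologicalClosure

/-- The normal closure in `G` of the closed subgroup generated by an element `c`:
the closed subgroup generated by all `G`-conjugates of `c`. -/
noncomputable def nclG (c : OmegaSG) : Subgroup OmegaSG :=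
  (Subgroup.closure {x | ∃ g ∈ Ggrp, x = g * c * g⁻¹}).topologicalClosure

/-- `U`, the normal closure in `G` of `⟨⟨a₂a₃⁻¹⟩⟩`. -/
noncomputable def Ugrp : Subgroup OmegaSG := nclG (A2 * A3⁻¹)

/-- `H₁`, the normal closure in `G` of `⟨⟨a₁⟩⟩`. -/
noncomputable def H1grp : Subgroup OmegaSG := nclG A1

/-- `H₃`, the normal closure in `G` of `⟨⟨a₃⟩⟩`. -/
noncomputable def H3grp : Subgroup OmegaSG := nclG A3

/-!
Conjugation by `a₁ = σ` inverts `γ₁` and `γ₂`, and conjugation by `a₃` sends `γ₁ ↦ γ₂⁻¹`,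
`γ₂ ↦ γ₁`. These identities only use the relations `a₁² = a₂⁴ = a₃⁴ = a₁a₂a₃ = 1`, which follow
from the wreath recursion. So the abstract subgroup `⟨a₁, a₃⟩` normalizes `⟨γ₁, γ₂⟩`, and by
continuity of conjugation every conjugate of `γ₁` by an element of `G = ⟨⟨a₁, a₃⟩⟩` lies in
`⟨⟨γ₁, γ₂⟩⟩`. Conversely `γ₂ = a₃⁻¹ γ₁ a₃` lies in `U`.
-/

namespace Subgroup

variable {G : Type*} [Group G]

theorem mem_normalizer_closure_pair {x u v : G}
    (hu : x * u * x⁻¹ ∈ ({u, u⁻¹, v, v⁻¹} : Set G))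
    (hv : x * v * x⁻¹ ∈ ({u, u⁻¹, v, v⁻¹} : Set G)) :
    x ∈ normalizer (closure {u, v} : Set G) := by
  set T : Set G := {u, u⁻¹, v, v⁻¹}
  have hT_inv : ∀ n ∈ T, n⁻¹ ∈ T := by
    rintro n (rfl | rfl | rfl | rfl) <;> simp [T]
  have hclosure : closure T = closure {u, v} := by
    refine le_antisymm ((closure_le _).2 ?_) (closure_mono (by simp [T, Set.insert_subset_iff]))
    have hu : u ∈ closure {u, v} := subset_closure (by simp)
    have hv : v ∈ closure {u, v} := subset_closure (by simp)
    rintro n (rfl | rfl | rfl | rfl)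
    exacts [hu, inv_mem hu, hv, inv_mem hv]
  rw [← hclosure]
  refine normalizer_le_normalizer_closure T (mem_normalizer_fintype ?_)
  rintro n (rfl | rfl | rfl | rfl)
  · exact hu
  · rw [← conj_inv]; exact hT_inv _ hu
  · exact hv
  · rw [← conj_inv]; exact hT_inv _ hv

theorem closure_le_normalizer_closure_of_relations {s a b : G} (hs : s ^ 2 = 1)
    (hsab : s * a * b = 1) (ha : a ^ 4 = 1) (hb : b ^ 4 = 1) :
    closure {s, b} ≤ normalizer (closure {a * b⁻¹, b⁻¹ * a} : Set G) := by
  have hs_inv : s⁻¹ = s := inv_eq_of_mul_eq_one_left (by rw [← sq, hs])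
  have ha_eq : a = s * b⁻¹ := by
    rw [eq_inv_mul_of_mul_eq (eq_inv_of_mul_eq_one_left hsab), hs_inv]
  have hs_conj_γ₁ : s * (a * b⁻¹) * s⁻¹ = (a * b⁻¹)⁻¹ := by
    refine eq_inv_of_mul_eq_one_left ?_
    calc s * (a * b⁻¹) * s⁻¹ * (a * b⁻¹) = s * s * (b ^ 2)⁻¹ * (s * s) * (b ^ 2)⁻¹ := by
          rw [ha_eq, hs_inv]; group
      _ = (b ^ 4)⁻¹ := by rw [← sq, hs]; group
      _ = 1 := by rw [hb, inv_one]
  have hs_conj_γ₂ : s * (b⁻¹ * a) * s⁻¹ = (b⁻¹ * a)⁻¹ := by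
    refine eq_inv_of_mul_eq_one_left ?_
    calc s * (b⁻¹ * a) * s⁻¹ * (b⁻¹ * a) = a ^ 4 := by
          rw [hs_inv, ha_eq]; simp only [pow_succ, pow_zero, one_mul, mul_assoc]
      _ = 1 := ha
  have hb_conj_γ₁ : b * (a * b⁻¹) * b⁻¹ = (b⁻¹ * a)⁻¹ := by
    refine eq_inv_of_mul_eq_one_left ?_
    calc b * (a * b⁻¹) * b⁻¹ * (b⁻¹ * a) = b * s * (b ^ 4)⁻¹ * s * b⁻¹ := by rw [ha_eq]; group
      _ = 1 := by rw [hb, inv_one, mul_one, mul_assoc b, ← sq, hs, mul_one, mul_inv_cancel]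
  have hb_conj_γ₂ : b * (b⁻¹ * a) * b⁻¹ = a * b⁻¹ := by group
  rw [closure_le, Set.insert_subset_iff, Set.singleton_subset_iff]
  exact ⟨mem_normalizer_closure_pair (by rw [hs_conj_γ₁]; simp) (by rw [hs_conj_γ₂]; simp),
    mem_normalizer_closure_pair (by rw [hb_conj_γ₁]; simp) (by rw [hb_conj_γ₂]; simp)⟩

theorem conj_mem_topologicalClosure_of_le_normalizer [TopologicalSpace G] [IsTopologicalGroup G]
    {H K : Subgroup G} (hHK : H ≤ normalizer (K : Set G))
    {x : G} (hx : x ∈ K) {g : G} (hg : g ∈ H.topologicalClosure) :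
    g * x * g⁻¹ ∈ K.topologicalClosure :=
  closure_minimal (t := (fun g => g * x * g⁻¹) ⁻¹' K.topologicalClosure)
    (fun _ hh => K.le_topologicalClosure ((hHK hh x).1 hx))
    (K.isClosed_topologicalClosure.preimage (by fun_prop)) hg

end Subgroup

section WreathRecursion

variable (u v u' v' : Perm Wd)

theorem pairPerm_mul : pairPerm u v * pairPerm u' v' = pairPerm (u * u') (v * v') := by
  ext w; rcases w with _ | ⟨_ | _, w⟩ <;> rfl

theorem pairPerm_one : pairPerm 1 1 = 1 := by
  ext w; rcases w with _ | ⟨_ | _, w⟩ <;> rfl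

theorem swapPerm_mul_pairPerm : swapPerm * pairPerm u v = pairPerm v u * swapPerm := by
  ext w; rcases w with _ | ⟨_ | _, w⟩ <;> rfl

theorem swapPerm_sq : swapPerm ^ 2 = 1 := by
  ext w; rcases w with _ | ⟨_ | _, w⟩ <;> rfl

def pairHom : Perm Wd × Perm Wd →* Perm Wd where
  toFun p := pairPerm p.1 p.2
  map_one' := pairPerm_one
  map_mul' p q := (pairPerm_mul p.1 p.2 q.1 q.2).symm

theorem pairPerm_pow (n : ℕ) : pairPerm u v ^ n = pairPerm (u ^ n) (v ^ n) :=
  (map_pow pairHom (u, v) n).symm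

end WreathRecursion

theorem a2_eq_pairPerm_mul_swapPerm : a2 = pairPerm a3⁻¹ a2⁻¹ * swapPerm := by
  ext w; rcases w with _ | ⟨_ | _, w⟩ <;> rfl

theorem a3_eq_pairPerm : a3 = pairPerm a2 a3 := by
  ext w; rcases w with _ | ⟨_ | _, w⟩ <;> rfl

theorem a2_mul_a3 : a2 * a3 = swapPerm :=
  calc a2 * a3 = pairPerm a3⁻¹ a2⁻¹ * swapPerm * pairPerm a2 a3 := by
        rw [← a2_eq_pairPerm_mul_swapPerm, ← a3_eq_pairPerm]
    _ = pairPerm (a3⁻¹ * a3) (a2⁻¹ * a2) * swapPerm := by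
        rw [mul_assoc, swapPerm_mul_pairPerm, ← mul_assoc, pairPerm_mul]
    _ = swapPerm := by rw [inv_mul_cancel, inv_mul_cancel, pairPerm_one, one_mul]

theorem a2_sq : a2 ^ 2 = pairPerm (a3⁻¹ * a2⁻¹) (a2⁻¹ * a3⁻¹) :=
  calc a2 ^ 2 = pairPerm a3⁻¹ a2⁻¹ * (swapPerm * pairPerm a3⁻¹ a2⁻¹) * swapPerm := by
        conv_lhs => rw [sq, a2_eq_pairPerm_mul_swapPerm]
        simp only [mul_assoc]
    _ = pairPerm (a3⁻¹ * a2⁻¹) (a2⁻¹ * a3⁻¹) := by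
        rw [swapPerm_mul_pairPerm, ← mul_assoc, pairPerm_mul, mul_assoc, ← sq, swapPerm_sq,
          mul_one]

theorem a2_pow_four : a2 ^ 4 = 1 := by
  have hσ : a3⁻¹ * a2⁻¹ = swapPerm := by
    rw [← mul_inv_rev, a2_mul_a3, ← mul_eq_one_iff_inv_eq, ← sq, swapPerm_sq]
  have hconj : (a2⁻¹ * a3⁻¹) ^ 2 = a2⁻¹ * (a3⁻¹ * a2⁻¹) ^ 2 * a2 := by
    rw [sq, sq]; group
  rw [show 4 = 2 * 2 from rfl, pow_mul, a2_sq, pairPerm_pow, hconj, hσ, swapPerm_sq, mul_one,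
    inv_mul_cancel, pairPerm_one]

theorem a3_pow_four : a3 ^ 4 = 1 := by
  refine Equiv.ext fun w => ?_
  induction w with
  | nil => rfl
  | cons b w ih =>
    conv_lhs => rw [a3_eq_pairPerm, pairPerm_pow, a2_pow_four]
    cases b
    · rfl
    · exact congrArg (true :: ·) ih

theorem A1_sq : A1 ^ 2 = 1 := Subtype.ext swapPerm_sq

theorem A1_mul_A2_mul_A3 : A1 * A2 * A3 = 1 :=
  Subtype.ext <| by
    change swapPerm * a2 * a3 = 1
    rw [mul_assoc, a2_mul_a3, ← sq, swapPerm_sq]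

theorem A2_pow_four : A2 ^ 4 = 1 := Subtype.ext a2_pow_four

theorem A3_pow_four : A3 ^ 4 = 1 := Subtype.ext a3_pow_four

theorem conj_mem_nclG (c : OmegaSG) {g : OmegaSG} (hg : g ∈ Ggrp) : g * c * g⁻¹ ∈ nclG c :=
  Subgroup.le_topologicalClosure _ (Subgroup.subset_closure ⟨g, hg, rfl⟩)

/-- The normal closure `U` in `G` of `⟨⟨a₂a₃⁻¹⟩⟩` is topologically
generated by `γ₁ = a₂a₃⁻¹` and `γ₂ = a₃⁻¹a₂`. -/
theorem stmt7 :
    Ugrp = (Subgroup.closure {A2 * A3⁻¹, A3⁻¹ * A2}).topologicalClosure := by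
  apply le_antisymm
  · refine Subgroup.topologicalClosure_minimal _ ((Subgroup.closure_le _).2 ?_)
      (Subgroup.isClosed_topologicalClosure _)
    rintro _ ⟨g, hg, rfl⟩
    have hnormalizes := Subgroup.closure_le_normalizer_closure_of_relations A1_sq
      A1_mul_A2_mul_A3 A2_pow_four A3_pow_four
    exact Subgroup.conj_mem_topologicalClosure_of_le_normalizer hnormalizes
      (Subgroup.subset_closure (Set.mem_insert _ _)) hg
  · refine Subgroup.topologicalClosure_minimal _ ((Subgroup.closure_le _).2 ?_)
      (Subgroup.isClosed_topologicalClosure _)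
    have hA3 : A3⁻¹ ∈ Ggrp :=
      inv_mem (Subgroup.le_topologicalClosure _ (Subgroup.subset_closure (by simp)))
    rintro _ (rfl | rfl)
    · simpa [Ugrp] using conj_mem_nclG (A2 * A3⁻¹) (one_mem Ggrp)
    · simpa [Ugrp, mul_assoc] using conj_mem_nclG (A2 * A3⁻¹) hA3
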